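/- arXiv:math/0009093 — 5 statements merged into one kernel-verified Lean document; each statement's English description precedes it below -/
import Mathlib

section
/- Let G be a group equipped with an action of ℂˣ by group automorphisms, and let χ : G → ℂˣ be a group homomorphism satisfying χ(g^λ) = χ(g) for all g ∈ G and λ ∈ ℂˣ. Then the twisted product g ∗ h = g · h^{χ(g)⁻¹} makes the underlying set of G into a group G_χ: the operation ∗ is associative, the identity element 1 of G is a two-sided identity for ∗, and for every g ∈ G the element (g⁻¹)^{χ(g)} is a two-sided inverse of g with respect to ∗. -/
/-!
Since `ℂˣ` is commutative, the automorphisms `φ λ` commute with each other, and the invariance of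
`χ` makes it multiplicative for the twisted product: `χ (g ∗ h) = χ g * χ h`. Both sides of
`(g ∗ h) ∗ k = g ∗ (h ∗ k)` then equal `g · h^{χ(g)⁻¹} · k^{(χ(g) χ(h))⁻¹}`, and
`χ((g⁻¹)^{χ(g)}) = χ(g)⁻¹` turns the left inverse law into `(g⁻¹ g)^{χ(g)} = 1`.
-/

/-- The twisted product `g ∗ h = g · h^{χ(g)⁻¹}` on a group `G` equipped with an
action `φ` of `ℂˣ` by group automorphisms and a character `χ : G → ℂˣ`. -/
def twistedMul {G : Type*} [Group G] (φ : ℂˣ →* MulAut G) (χ : G →* ℂˣ) (g h : G) : G :=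
  g * φ (χ g)⁻¹ h

section TwistedMul

variable {G : Type*} [Group G] (φ : ℂˣ →* MulAut G) (χ : G →* ℂˣ)

theorem one_twistedMul (g : G) : twistedMul φ χ 1 g = g := by
  simp [twistedMul]

theorem twistedMul_one (g : G) : twistedMul φ χ g 1 = g := by
  simp [twistedMul]

theorem twistedMul_inv_self (g : G) : twistedMul φ χ g (φ (χ g) g⁻¹) = 1 := by
  simp [twistedMul]

variable {φ χ} (hχ : ∀ (g : G) (l : ℂˣ), χ (φ l g) = χ g)
include hχ

theorem map_twistedMul (g h : G) : χ (twistedMul φ χ g h) = χ g * χ h := by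
  rw [twistedMul, map_mul, hχ]

theorem twistedMul_assoc (g h k : G) :
    twistedMul φ χ (twistedMul φ χ g h) k = twistedMul φ χ g (twistedMul φ χ h k) := by
  rw [twistedMul, map_twistedMul hχ]
  simp only [twistedMul, mul_inv, map_mul, MulAut.mul_apply, mul_assoc]

theorem inv_twistedMul_self (g : G) : twistedMul φ χ (φ (χ g) g⁻¹) g = 1 := by
  rw [twistedMul, hχ, map_inv χ, inv_inv, ← map_mul, inv_mul_cancel, map_one]

end TwistedMul

/-- The twisted product makes the underlying set of `G` into a group `G_χ`:
it is associative, `1` is a two-sided identity, and `(g⁻¹)^{χ(g)}` is a two-sided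
inverse of `g`. -/
theorem statement0 {G : Type*} [Group G] (φ : ℂˣ →* MulAut G) (χ : G →* ℂˣ)
    (hχ : ∀ (g : G) (l : ℂˣ), χ (φ l g) = χ g) :
    (∀ g h k : G, twistedMul φ χ (twistedMul φ χ g h) k
        = twistedMul φ χ g (twistedMul φ χ h k)) ∧
    (∀ g : G, twistedMul φ χ 1 g = g) ∧
    (∀ g : G, twistedMul φ χ g 1 = g) ∧
    (∀ g : G, twistedMul φ χ g (φ (χ g) g⁻¹) = 1) ∧
    (∀ g : G, twistedMul φ χ (φ (χ g) g⁻¹) g = 1) :=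
  ⟨twistedMul_assoc hχ, one_twistedMul φ χ, twistedMul_one φ χ, twistedMul_inv_self φ χ,
    inv_twistedMul_self hχ⟩
end

section
/- Let K be a normal subgroup of a group G, let V be a nonzero finite-dimensional complex vector space, and let ρ : K → GL(V) be an irreducible representation. Let g ∈ G and n ≥ 1 be such that gⁿ ∈ K, and suppose T ∈ GL(V) satisfies ρ(g k g⁻¹) = T ρ(k) T⁻¹ for all k ∈ K. Then there exists μ ∈ ℂˣ such that (μT)ⁿ = ρ(gⁿ). -/
/-!
The relation `ρ(g k g⁻¹) = T ρ(k) T⁻¹` iterates to `ρ(gⁿ k g⁻ⁿ) = Tⁿ ρ(k) T⁻ⁿ`. Since `gⁿ ∈ K`,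
the left side is also `ρ(gⁿ) ρ(k) ρ(gⁿ)⁻¹`, so `ρ(gⁿ)⁻¹ Tⁿ` commutes with `ρ(K)` and by Schur's
lemma is a nonzero scalar `c`. Any `μ` with `μⁿ = c⁻¹` then works.
-/

/-- A representation `ρ : K → GL(V)` is irreducible if `V ≠ 0` and the only
subspaces of `V` invariant under all `ρ(k)` are `0` and `V`. -/
def IsIrreducibleRep {K : Type*} [Group K] {V : Type*} [AddCommGroup V] [Module ℂ V]
    (ρ : K →* (V →ₗ[ℂ] V)ˣ) : Prop :=
  Nontrivial V ∧
    ∀ W : Submodule ℂ V, (∀ k : K, ∀ v ∈ W, (ρ k : V →ₗ[ℂ] V) v ∈ W) → W = ⊥ ∨ W = ⊤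

/-- For a normal subgroup `K ⊆ G` and `g ∈ G`, the homomorphism
`Int_g|_K : K → K`, `k ↦ g k g⁻¹`. -/
def intK {G : Type*} [Group G] (K : Subgroup G) [K.Normal] (g : G) : ↥K →* ↥K :=
  (MulAut.conjNormal g).toMonoidHom

section Schur

variable {K : Type*} [Group K] {V : Type*} [AddCommGroup V] [Module ℂ V] [FiniteDimensional ℂ V]
  {ρ : K →* (V →ₗ[ℂ] V)ˣ}

theorem IsIrreducibleRep.exists_eq_smul_one (hirr : IsIrreducibleRep ρ) (f : Module.End ℂ V)
    (hf : ∀ k, Commute f (ρ k)) : ∃ c : ℂ, f = c • 1 := by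
  obtain ⟨hV, hW⟩ := hirr
  obtain ⟨c, hc⟩ := Module.End.exists_eigenvalue f
  have hinv : ∀ k, ∀ v ∈ f.eigenspace c, (ρ k : V →ₗ[ℂ] V) v ∈ f.eigenspace c := by
    intro k v hv
    rw [Module.End.mem_eigenspace_iff] at hv ⊢
    rw [← Module.End.mul_apply, (hf k).eq, Module.End.mul_apply, hv, map_smul]
  have htop : f.eigenspace c = ⊤ := (hW _ hinv).resolve_left hc
  refine ⟨c, LinearMap.ext fun v => ?_⟩
  have hv : v ∈ f.eigenspace c := htop ▸ Submodule.mem_top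
  simpa using Module.End.mem_eigenspace_iff.mp hv

theorem IsIrreducibleRep.exists_val_eq_smul_of_conj_eq (hirr : IsIrreducibleRep ρ)
    (A B : (V →ₗ[ℂ] V)ˣ) (h : ∀ k, A * ρ k * A⁻¹ = B * ρ k * B⁻¹) :
    ∃ c : ℂˣ, (A : V →ₗ[ℂ] V) = (c : ℂ) • (B : V →ₗ[ℂ] V) := by
  have hcomm : ∀ k, Commute ((B⁻¹ * A : (V →ₗ[ℂ] V)ˣ) : V →ₗ[ℂ] V) (ρ k) := by
    intro k
    refine Commute.units_val ?_
    calc B⁻¹ * A * ρ k = B⁻¹ * (A * ρ k * A⁻¹) * A := by group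
      _ = B⁻¹ * (B * ρ k * B⁻¹) * A := by rw [h]
      _ = ρ k * (B⁻¹ * A) := by group
  obtain ⟨c, hc⟩ := hirr.exists_eq_smul_one _ hcomm
  have hc0 : c ≠ 0 := by
    rintro rfl
    have := hirr.1
    exact (B⁻¹ * A).ne_zero (by rw [hc, zero_smul])
  refine ⟨Units.mk0 c hc0, ?_⟩
  calc (A : V →ₗ[ℂ] V) = B * ((B⁻¹ * A : (V →ₗ[ℂ] V)ˣ) : V →ₗ[ℂ] V) := by simp
    _ = _ := by rw [hc, mul_smul_comm, mul_one, Units.val_mk0]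

end Schur

section Conjugation

variable {G : Type*} [Group G] (K : Subgroup G) [K.Normal]

theorem intK_of_mem {h : G} (hh : h ∈ K) (k : K) : intK K h k = ⟨h, hh⟩ * k * ⟨h, hh⟩⁻¹ :=
  Subtype.ext (MulAut.conjNormal_apply h k)

theorem intK_pow_succ (g : G) (m : ℕ) (k : K) :
    intK K (g ^ (m + 1)) k = intK K g (intK K (g ^ m) k) := by
  simp [intK, pow_succ', map_mul]

theorem map_intK_pow {M : Type*} [Group M] (ρ : K →* M) {g : G} {T : M}
    (hT : ∀ k, ρ (intK K g k) = T * ρ k * T⁻¹) (m : ℕ) (k : K) :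
    ρ (intK K (g ^ m) k) = T ^ m * ρ k * (T ^ m)⁻¹ := by
  induction m generalizing k with
  | zero => simp [intK]
  | succ m ih => rw [intK_pow_succ, hT, ih]; group

end Conjugation

/-- Schur's lemma normalisation: if `ρ : K → GL(V)` is irreducible, `gⁿ ∈ K` with
`n ≥ 1`, and `T ∈ GL(V)` satisfies `ρ(g k g⁻¹) = T ρ(k) T⁻¹` for all `k ∈ K`, then
there is `μ ∈ ℂˣ` with `(μT)ⁿ = ρ(gⁿ)`. -/
theorem statement8 {G : Type*} [Group G] (K : Subgroup G) [K.Normal]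
    {V : Type*} [AddCommGroup V] [Module ℂ V] [FiniteDimensional ℂ V]
    (ρ : ↥K →* (V →ₗ[ℂ] V)ˣ) (hirr : IsIrreducibleRep ρ)
    (g : G) (n : ℕ) (hn : 1 ≤ n) (hgn : g ^ n ∈ K)
    (T : (V →ₗ[ℂ] V)ˣ)
    (hT : ∀ k : ↥K, ρ (intK K g k) = T * ρ k * T⁻¹) :
    ∃ μ : ℂˣ, ((μ : ℂ) • (T : V →ₗ[ℂ] V)) ^ n = (ρ ⟨g ^ n, hgn⟩ : V →ₗ[ℂ] V) := by
  have hconj : ∀ k, T ^ n * ρ k * (T ^ n)⁻¹ = ρ ⟨g ^ n, hgn⟩ * ρ k * (ρ ⟨g ^ n, hgn⟩)⁻¹ := by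
    intro k
    rw [← map_intK_pow K ρ hT, intK_of_mem K hgn]
    simp only [map_mul, map_inv]
  obtain ⟨c, hc⟩ := hirr.exists_val_eq_smul_of_conj_eq _ _ hconj
  obtain ⟨μ, hμ⟩ := IsAlgClosed.exists_pow_nat_eq ((c⁻¹ : ℂˣ) : ℂ) hn
  have hμ0 : μ ≠ 0 := ne_zero_pow (by omega) (hμ ▸ (c⁻¹).ne_zero)
  refine ⟨Units.mk0 μ hμ0, ?_⟩
  rw [smul_pow, Units.val_mk0, hμ, ← Units.val_pow_eq_pow_val, hc, smul_smul,
    Units.inv_mul, one_smul]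
end

section
/- Let K be a normal subgroup of a group G and suppose the quotient G/K is cyclic of order n, generated by the coset gK of an element g ∈ G (so gⁿ ∈ K). Let V be a complex vector space, ρ : K → GL(V) a group homomorphism, and T ∈ GL(V) satisfying T ρ(k) T⁻¹ = ρ(g k g⁻¹) for all k ∈ K and Tⁿ = ρ(gⁿ). Then there exists a unique group homomorphism ρ̃ : G → GL(V) such that ρ̃(k) = ρ(k) for all k ∈ K and ρ̃(g) = T. -/
open Multiplicative SemidirectProduct

namespace Subgroup

variable {G M : Type*} [Group G] [Group M] (K : Subgroup G) [K.Normal] (g : G)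

abbrev conjZPow : Multiplicative ℤ →* MulAut K :=
  MulAut.conjNormal.comp (zpowersHom G g)

def mulZPow : K ⋊[K.conjZPow g] Multiplicative ℤ →* G :=
  SemidirectProduct.lift K.subtype (zpowersHom G g) fun m => by
    ext k
    simp only [MonoidHom.comp_apply, zpowersHom_apply, MulEquiv.coe_toMonoidHom,
      MulAut.conj_apply, coe_subtype, MulAut.conjNormal_apply]

@[simp]
theorem mulZPow_apply (x : K ⋊[K.conjZPow g] Multiplicative ℤ) :
    K.mulZPow g x = x.left * g ^ x.right.toAdd :=
  rfl

variable {K g}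

theorem mulZPow_surjective (hgen : ∀ x : G ⧸ K, x ∈ zpowers (g : G ⧸ K)) :
    Function.Surjective (K.mulZPow g) := by
  intro x
  obtain ⟨j, hj⟩ := hgen x
  have hx : x * g ^ (-j) ∈ K := by
    rw [← QuotientGroup.eq_one_iff, QuotientGroup.mk_mul, QuotientGroup.mk_zpow, ← hj]
    simp
  exact ⟨⟨⟨_, hx⟩, ofAdd j⟩, by simp⟩

theorem ker_mulZPow {n : ℕ} (horder : orderOf (g : G ⧸ K) = n) (hgn : g ^ n ∈ K) :
    (K.mulZPow g).ker = zpowers (inl ⟨g ^ n, hgn⟩⁻¹ * inr (ofAdd (n : ℤ))) := by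
  set z : K ⋊[K.conjZPow g] Multiplicative ℤ := inl ⟨g ^ n, hgn⟩⁻¹ * inr (ofAdd (n : ℤ))
  have hz : K.mulZPow g z = 1 := by simp [z]
  refine le_antisymm (fun x hx => ?_) (zpowers_le.mpr hz)
  rw [MonoidHom.mem_ker] at hx
  have hleft : (x.left : G) = (g ^ x.right.toAdd)⁻¹ := eq_inv_of_mul_eq_one_left hx
  obtain ⟨t, ht⟩ : (n : ℤ) ∣ x.right.toAdd := by
    rw [← horder, orderOf_dvd_iff_zpow_eq_one, ← QuotientGroup.mk_zpow, QuotientGroup.eq_one_iff,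
      ← inv_mem_iff, ← hleft]
    exact x.left.2
  have hright : (z ^ t).right = x.right := by
    rw [← rightHom_eq_right, map_zpow]
    simp only [z, map_mul, rightHom_inl, rightHom_inr, one_mul, rightHom_eq_right]
    rw [← ofAdd_toAdd x.right, ht, ← ofAdd_zsmul, smul_eq_mul, mul_comm]
  refine ⟨t, SemidirectProduct.ext (Subtype.ext ?_) hright⟩
  have hzt : K.mulZPow g (z ^ t) = 1 := by rw [map_zpow, hz, one_zpow]
  rw [mulZPow_apply, hright] at hzt
  rw [hleft, eq_inv_of_mul_eq_one_left hzt]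

variable {ρ : K →* M} {T : M}

theorem map_conjNormal_zpow (hT : ∀ k : K, T * ρ k * T⁻¹ = ρ (MulAut.conjNormal g k))
    (m : ℤ) (k : K) : ρ (MulAut.conjNormal (g ^ m) k) = T ^ m * ρ k * (T ^ m)⁻¹ := by
  induction m using Int.induction_on generalizing k with
  | zero => simp
  | succ i ih => rw [zpow_add_one, map_mul, MulAut.mul_apply, ih, ← hT, zpow_add_one]; group
  | pred i ih =>
    have hinv : ρ (MulAut.conjNormal g⁻¹ k) = T⁻¹ * ρ k * T := by
      have h := hT (MulAut.conjNormal g⁻¹ k)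
      rw [← MulAut.mul_apply, ← map_mul, mul_inv_cancel, map_one, MulAut.one_apply] at h
      rw [← h]
      group
    rw [zpow_sub_one, map_mul, MulAut.mul_apply, ih, hinv, zpow_sub_one]; group

variable (K g ρ T) in
def liftZPow (hT : ∀ k : K, T * ρ k * T⁻¹ = ρ (MulAut.conjNormal g k)) :
    K ⋊[K.conjZPow g] Multiplicative ℤ →* M :=
  SemidirectProduct.lift ρ (zpowersHom M T) fun m => by
    ext k
    simp only [MonoidHom.comp_apply, zpowersHom_apply, MulEquiv.coe_toMonoidHom,
      MulAut.conj_apply, map_conjNormal_zpow hT]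

theorem hom_ext_of_forall_mem_zpowers (hgen : ∀ x : G ⧸ K, x ∈ zpowers (g : G ⧸ K))
    {f₁ f₂ : G →* M} (hK : ∀ k : K, f₁ k = f₂ k) (hg : f₁ g = f₂ g) : f₁ = f₂ :=
  (MonoidHom.cancel_right (mulZPow_surjective hgen)).1 <|
    SemidirectProduct.hom_ext (MonoidHom.ext fun k => by simpa using hK k)
      (MonoidHom.ext_mint (by simpa using hg))

theorem existsUnique_extension_of_quotient_zpowers
    (hgen : ∀ x : G ⧸ K, x ∈ zpowers (g : G ⧸ K)) {n : ℕ} (horder : orderOf (g : G ⧸ K) = n)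
    (hgn : g ^ n ∈ K) (hT : ∀ k : K, T * ρ k * T⁻¹ = ρ (MulAut.conjNormal g k))
    (hTn : T ^ n = ρ ⟨g ^ n, hgn⟩) :
    ∃! ρt : G →* M, (∀ k : K, ρt k = ρ k) ∧ ρt g = T := by
  have hker : (K.mulZPow g).ker ≤ (liftZPow K g ρ T hT).ker := by
    rw [ker_mulZPow horder hgn, zpowers_le, MonoidHom.mem_ker]
    simp [liftZPow, hTn]
  set ρt := (K.mulZPow g).liftOfSurjective (mulZPow_surjective hgen) ⟨_, hker⟩
  have hρt (x) : ρt (K.mulZPow g x) = liftZPow K g ρ T hT x :=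
    (K.mulZPow g).liftOfRightInverse_comp_apply _ _ _ x
  have hK (k : K) : ρt k = ρ k := by simpa [liftZPow] using hρt (inl k)
  have hg : ρt g = T := by simpa [liftZPow] using hρt (inr (ofAdd 1))
  refine ⟨ρt, ⟨hK, hg⟩, fun ρ' h => hom_ext_of_forall_mem_zpowers hgen ?_ ?_⟩
  · exact fun k => (h.1 k).trans (hK k).symm
  · exact h.2.trans hg.symm

end Subgroup

theorem statement9_general {G : Type*} [Group G] (K : Subgroup G) [K.Normal]
    {V : Type*} [AddCommGroup V] [Module ℂ V]
    (ρ : ↥K →* (V →ₗ[ℂ] V)ˣ) (g : G) (n : ℕ)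
    (horder : orderOf ((g : G) : G ⧸ K) = n)
    (hgen : ∀ x : G ⧸ K, x ∈ Subgroup.zpowers ((g : G) : G ⧸ K))
    (hgn : g ^ n ∈ K)
    (T : (V →ₗ[ℂ] V)ˣ)
    (hT : ∀ k : ↥K, T * ρ k * T⁻¹ = ρ (intK K g k))
    (hTn : T ^ n = ρ ⟨g ^ n, hgn⟩) :
    ∃! ρt : G →* (V →ₗ[ℂ] V)ˣ, (∀ k : ↥K, ρt (k : G) = ρ k) ∧ ρt g = T :=
  Subgroup.existsUnique_extension_of_quotient_zpowers hgen horder hgn hT hTn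

/-- If `G/K` is cyclic of order `n` generated by the coset `gK` (so `gⁿ ∈ K`),
`ρ : K → GL(V)` is a homomorphism and `T ∈ GL(V)` satisfies
`T ρ(k) T⁻¹ = ρ(g k g⁻¹)` for all `k ∈ K` and `Tⁿ = ρ(gⁿ)`, then there is a unique
homomorphism `ρ̃ : G → GL(V)` with `ρ̃|_K = ρ` and `ρ̃(g) = T`. -/
theorem statement9 {G : Type*} [Group G] (K : Subgroup G) [K.Normal]
    {V : Type*} [AddCommGroup V] [Module ℂ V]
    (ρ : ↥K →* (V →ₗ[ℂ] V)ˣ) (g : G) (n : ℕ) (hn : 0 < n)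
    (horder : orderOf ((g : G) : G ⧸ K) = n)
    (hgen : ∀ x : G ⧸ K, x ∈ Subgroup.zpowers ((g : G) : G ⧸ K))
    (hgn : g ^ n ∈ K)
    (T : (V →ₗ[ℂ] V)ˣ)
    (hT : ∀ k : ↥K, T * ρ k * T⁻¹ = ρ (intK K g k))
    (hTn : T ^ n = ρ ⟨g ^ n, hgn⟩) :
    ∃! ρt : G →* (V →ₗ[ℂ] V)ˣ, (∀ k : ↥K, ρt (k : G) = ρ k) ∧ ρt g = T :=
  statement9_general K ρ g n horder hgen hgn T hT hTn
end

section
/- Let K be a normal subgroup of a group G such that the quotient G/K is finite cyclic. Let V be a nonzero finite-dimensional complex vector space and ρ : K → GL(V) an irreducible representation such that ρ ∘ Int_g|_K is equivalent to ρ for every g ∈ G. Then ρ extends to a representation of G: there exists a group homomorphism ρ̃ : G → GL(V) with ρ̃(k) = ρ(k) for all k ∈ K. -/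
/-- Two representations `ρ, ρ' : K → GL(V)` are equivalent if there is `T ∈ GL(V)`
with `ρ'(k) = T ρ(k) T⁻¹` for all `k`. -/
def RepEquiv {K : Type*} [Group K] {V : Type*} [AddCommGroup V] [Module ℂ V]
    (ρ ρ' : K →* (V →ₗ[ℂ] V)ˣ) : Prop :=
  ∃ T : (V →ₗ[ℂ] V)ˣ, ∀ k : K, ρ' k = T * ρ k * T⁻¹

/-!
Choose `g ∈ G` whose image generates `G/K`, let `n` be the order of that image, and let `T`
intertwine `ρ` with `ρ ∘ Int_g`. Then `ρ(gⁿ)⁻¹ Tⁿ` commutes with `ρ`, so by Schur's lemma it is a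
scalar `μ`; rescaling `T` by an `n`-th root of `μ⁻¹` gives `S` with `Sⁿ = ρ(gⁿ)`. The
homomorphism `K ⋊ ℤ → GL(V)`, `(k, m) ↦ ρ(k) Sᵐ`, then kills the kernel of the surjection
`K ⋊ ℤ → G`, `(k, m) ↦ k gᵐ`, and so descends to the required extension of `ρ`.
-/

theorem MonoidHom.map_zpow_mulAut_apply {N H : Type*} [Group N] [Group H] (ρ : N →* H)
    {α : MulAut N} {β : MulAut H} (h : ∀ n, ρ (α n) = β (ρ n)) (m : ℤ) (n : N) :
    ρ ((α ^ m) n) = (β ^ m) (ρ n) := by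
  have h_inv : ∀ n, ρ (α⁻¹ n) = β⁻¹ (ρ n) := fun n ↦ by
    rw [MulAut.inv_apply, MulAut.inv_apply, MulEquiv.eq_symm_apply, ← h, MulEquiv.apply_symm_apply]
  induction m using Int.induction_on generalizing n with
  | zero => rfl
  | succ m ih => rw [zpow_add_one, zpow_add_one, MulAut.mul_apply, MulAut.mul_apply, ih, h]
  | pred m ih => rw [zpow_sub_one, zpow_sub_one, MulAut.mul_apply, MulAut.mul_apply, ih, h_inv]

section Extension

variable {G H : Type*} [Group G] [Group H] {K : Subgroup G} [K.Normal] {ρ : K →* H} {g : G}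

theorem commute_inv_mul_zpow {T : H}
    (hT : ∀ k, ρ (MulAut.conjNormal g k) = MulAut.conj T (ρ k)) {m : ℤ} {k₀ : K}
    (hk₀ : (k₀ : G) = g ^ m) (k : K) : Commute ((ρ k₀)⁻¹ * T ^ m) (ρ k) := by
  have hconj : MulAut.conjNormal (g ^ m) k = k₀ * k * k₀⁻¹ :=
    Subtype.ext (by simp [hk₀, -map_zpow])
  have h := ρ.map_zpow_mulAut_apply hT m k
  rw [← map_zpow, ← map_zpow, hconj, MulAut.conj_apply, map_mul, map_mul, map_inv] at h
  have h' : T ^ m * ρ k = ρ k₀ * ρ k * (ρ k₀)⁻¹ * T ^ m := by rw [h]; group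
  change (ρ k₀)⁻¹ * T ^ m * ρ k = ρ k * ((ρ k₀)⁻¹ * T ^ m)
  rw [mul_assoc, h']
  group

theorem exists_extension_of_zpowers (hg : ∀ x : G ⧸ K, x ∈ Subgroup.zpowers (g : G ⧸ K)) {S : H}
    (hS : ∀ k, ρ (MulAut.conjNormal g k) = MulAut.conj S (ρ k))
    (hpow : ∀ (m : ℤ) (k : K), (k : G) = g ^ m → S ^ m = ρ k) :
    ∃ ρt : G →* H, ∀ k : K, ρt k = ρ k := by
  let φ : Multiplicative ℤ →* MulAut K := MulAut.conjNormal.comp (zpowersHom G g)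
  let f : K ⋊[φ] Multiplicative ℤ →* G :=
    SemidirectProduct.lift K.subtype (zpowersHom G g) fun m ↦ by ext; simp [φ, -map_zpow]
  let ψ : K ⋊[φ] Multiplicative ℤ →* H :=
    SemidirectProduct.lift ρ (zpowersHom H S) fun m ↦ MonoidHom.ext fun k ↦ by
      simpa [φ, map_zpow] using ρ.map_zpow_mulAut_apply hS m.toAdd k
  have hf : Function.Surjective f := by
    intro x
    obtain ⟨m, hm⟩ := Subgroup.mem_zpowers_iff.mp (hg x)
    have hmem : x * g ^ (-m) ∈ K := (QuotientGroup.eq_one_iff _).mp (by simp [← hm])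
    exact ⟨⟨⟨_, hmem⟩, .ofAdd m⟩, by simp [f]⟩
  have hker : f.ker ≤ ψ.ker := by
    rintro ⟨k, m⟩ hkm
    have hk : ((k⁻¹ : K) : G) = g ^ m.toAdd := by
      simpa [f, eq_comm, inv_eq_iff_mul_eq_one] using hkm
    simp [ψ, SemidirectProduct.mk_eq_inl_mul_inr, hpow _ _ hk]
  refine ⟨f.liftOfSurjective hf ⟨ψ, hker⟩, fun k ↦ ?_⟩
  simpa [f, ψ] using f.liftOfRightInverse_comp_apply _ _ ⟨ψ, hker⟩ (SemidirectProduct.inl k)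

theorem zpow_eq_of_pow_orderOf_eq {S : H} {gn : K} (hgn : (gn : G) = g ^ orderOf (g : G ⧸ K))
    (hSn : S ^ orderOf (g : G ⧸ K) = ρ gn) (m : ℤ) (k : K) (hk : (k : G) = g ^ m) :
    S ^ m = ρ k := by
  obtain ⟨t, rfl⟩ : (orderOf (g : G ⧸ K) : ℤ) ∣ m := by
    rw [orderOf_dvd_iff_zpow_eq_one, ← QuotientGroup.mk_zpow, ← hk, QuotientGroup.eq_one_iff]
    exact k.2
  have hk' : k = gn ^ t := Subtype.ext (by simp [hk, hgn, zpow_mul])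
  rw [hk', map_zpow, ← hSn, zpow_mul, zpow_natCast]

theorem exists_extension_of_pow_eq_mul_center
    (hg : ∀ x : G ⧸ K, x ∈ Subgroup.zpowers (g : G ⧸ K)) {T z : H}
    (hT : ∀ k, ρ (MulAut.conjNormal g k) = MulAut.conj T (ρ k)) (hz : z ∈ Subgroup.center H)
    {gn : K} (hgn : (gn : G) = g ^ orderOf (g : G ⧸ K))
    (hTn : T ^ orderOf (g : G ⧸ K) = ρ gn * z ^ orderOf (g : G ⧸ K)) :
    ∃ ρt : G →* H, ∀ k : K, ρt k = ρ k := by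
  have hz' : ∀ x, Commute z x := fun x ↦ (Subgroup.mem_center_iff.mp hz x).symm
  refine exists_extension_of_zpowers hg (S := z⁻¹ * T) (fun k ↦ ?_)
    (zpow_eq_of_pow_orderOf_eq hgn ?_)
  · rw [hT, map_mul, MulAut.mul_apply, MulAut.conj_apply z⁻¹, (hz' _).inv_left.eq,
      mul_inv_cancel_right]
  · rw [(hz' T).inv_left.mul_pow, hTn, ← ((hz' _).pow_left _).eq, inv_pow, inv_mul_cancel_left]

end Extension

theorem IsIrreducibleRep.exists_eq_algebraMap_of_commute {K V : Type*} [Group K]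
    [AddCommGroup V] [Module ℂ V] [FiniteDimensional ℂ V] {ρ : K →* (V →ₗ[ℂ] V)ˣ}
    (hirr : IsIrreducibleRep ρ)
    {A : Module.End ℂ V} (hA : ∀ k, Commute A (ρ k)) : ∃ μ : ℂ, A = algebraMap ℂ _ μ := by
  have := hirr.1
  obtain ⟨μ, hμ⟩ := A.exists_eigenvalue
  have htop : A.eigenspace μ = ⊤ := by
    refine (hirr.2 _ fun k v hv ↦ ?_).resolve_left hμ
    rw [Module.End.mem_eigenspace_iff] at hv ⊢
    rw [← Module.End.mul_apply, (hA k).eq, Module.End.mul_apply, hv, map_smul]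
  refine ⟨μ, LinearMap.ext fun v ↦ ?_⟩
  exact Module.End.mem_eigenspace_iff.mp (htop ▸ Submodule.mem_top)

/-- If `G/K` is finite cyclic and `ρ : K → GL(V)` is an irreducible representation
on a nonzero finite-dimensional complex vector space such that `ρ ∘ Int_g|_K` is
equivalent to `ρ` for every `g ∈ G`, then `ρ` extends to a representation of `G`. -/
theorem statement10 {G : Type*} [Group G] (K : Subgroup G) [K.Normal]
    [Finite (G ⧸ K)] [IsCyclic (G ⧸ K)]
    {V : Type*} [AddCommGroup V] [Module ℂ V] [FiniteDimensional ℂ V]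
    (ρ : ↥K →* (V →ₗ[ℂ] V)ˣ) (hirr : IsIrreducibleRep ρ)
    (hconj : ∀ g : G, RepEquiv ρ (ρ.comp (intK K g))) :
    ∃ ρt : G →* (V →ₗ[ℂ] V)ˣ, ∀ k : ↥K, ρt (k : G) = ρ k := by
  have := hirr.1
  obtain ⟨q, hq⟩ := IsCyclic.exists_generator (α := G ⧸ K)
  obtain ⟨g, rfl⟩ := QuotientGroup.mk_surjective q
  set n := orderOf (g : G ⧸ K)
  obtain ⟨T, hT⟩ := hconj g
  replace hT : ∀ k, ρ (MulAut.conjNormal g k) = MulAut.conj T (ρ k) := hT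
  let gn : K := ⟨g ^ n, (QuotientGroup.eq_one_iff _).mp (by simp [n, pow_orderOf_eq_one])⟩
  obtain ⟨μ, hμ⟩ := hirr.exists_eq_algebraMap_of_commute (A := ↑((ρ gn)⁻¹ * T ^ n)) fun k ↦
    (commute_inv_mul_zpow (m := n) hT (by simp [gn]) k).units_val
  obtain ⟨c, hc⟩ := IsAlgClosed.exists_pow_nat_eq μ (orderOf_pos (g : G ⧸ K))
  have hc0 : c ≠ 0 := by
    rintro rfl
    exact Units.ne_zero ((ρ gn)⁻¹ * T ^ n)
      (by rw [hμ, ← hc, zero_pow (orderOf_pos _).ne', map_zero])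
  let z := Units.map (algebraMap ℂ (Module.End ℂ V)).toMonoidHom (Units.mk0 c hc0)
  have hz : z ∈ Subgroup.center _ := Subgroup.mem_center_iff.mpr fun w ↦
    Units.ext (Algebra.commutes c (w : Module.End ℂ V)).symm
  refine exists_extension_of_pow_eq_mul_center hq hT hz (gn := gn) rfl ?_
  rw [← inv_mul_eq_iff_eq_mul]
  exact Units.ext (by rw [hμ, ← hc, map_pow, Units.val_pow_eq_pow_val]; rfl)
end

section
/- Let K be a normal subgroup of a group G such that the quotient G/K is finite cyclic. Let V be a finite-dimensional complex vector space and ρ : K → GL(V) a semisimple representation such that ρ ∘ Int_g|_K is equivalent to ρ for every g ∈ G. Then ρ extends to a semisimple representation of G: there exists a group homomorphism ρ̃ : G → GL(V) with ρ̃(k) = ρ(k) for all k ∈ K, and ρ̃ is semisimple. -/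
/-- A representation `ρ : K → GL(V)` on a finite-dimensional complex vector space is
semisimple if `V` is a direct sum of irreducible invariant subspaces; equivalently,
every `ρ`-invariant subspace admits a `ρ`-invariant complement. -/
def IsSemisimpleRep {K : Type*} [Group K] {V : Type*} [AddCommGroup V] [Module ℂ V]
    (ρ : K →* (V →ₗ[ℂ] V)ˣ) : Prop :=
  ∀ W : Submodule ℂ V, (∀ k : K, ∀ v ∈ W, (ρ k : V →ₗ[ℂ] V) v ∈ W) →
    ∃ W' : Submodule ℂ V, (∀ k : K, ∀ v ∈ W', (ρ k : V →ₗ[ℂ] V) v ∈ W') ∧ IsCompl W W'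

theorem binomD {A : Type*} [CommRing A] (n : ℕ) (w : A) :
    ∃ a : A, (1 + w)^n = 1 + n • w + a * w^2 := by
  induction n with
  | zero => exact ⟨0, by simp⟩
  | succ n ih =>
    obtain ⟨a, ha⟩ := ih
    refine ⟨a + n • 1 + a * w, ?_⟩
    rw [pow_succ, ha]
    push_cast [succ_nsmul]
    ring

theorem rootOneAdd {A : Type*} [CommRing A] [Algebra ℂ A] {n : ℕ} (hn : n ≠ 0) :
    ∀ m : ℕ, ∀ z : A, z ^ (2 ^ m) = 0 → ∃ u : A, IsUnit u ∧ u ^ n = 1 + z := by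
  intro m
  induction m with
  | zero =>
    intro z hz
    simp only [pow_zero, pow_one] at hz
    exact ⟨1, isUnit_one, by simp [hz]⟩
  | succ m ih =>
    intro z hz
    set w : A := ((n : ℂ)⁻¹) • z with hw
    have hnz : (n : ℂ) ≠ 0 := Nat.cast_ne_zero.mpr hn
    have hnw : n • w = z := by
      rw [hw, ← Nat.cast_smul_eq_nsmul ℂ, smul_smul, mul_inv_cancel₀ hnz, one_smul]
    obtain ⟨a, ha⟩ := binomD n w
    have hwn : w ^ (2 ^ (m + 1)) = 0 := by
      rw [hw, smul_pow, hz, smul_zero]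
    have hu0 : IsUnit (1 + w) := IsNilpotent.isUnit_one_add ⟨2 ^ (m+1), hwn⟩
    obtain ⟨u₀, hu₀⟩ := hu0
    have hu0n : (u₀ : A) ^ n = 1 + z + a * w ^ 2 := by rw [hu₀, ha, hnw]
    set z' : A := -(((u₀⁻¹ : Aˣ) : A))^n * (a * w^2) with hz'
    have hz'pow : z' ^ (2 ^ m) = 0 := by
      have h2 : (w ^ 2) ^ (2 ^ m) = 0 := by
        rw [← pow_mul, mul_comm 2 (2^m), ← pow_succ, hwn]
      rw [hz', mul_pow, mul_pow, h2, mul_zero, mul_zero]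
    obtain ⟨v, hv, hvn⟩ := ih z' hz'pow
    refine ⟨(u₀ : A) * v, (Units.isUnit u₀).mul hv, ?_⟩
    rw [mul_pow, hvn, hz', hu0n]
    have huu : ((u₀⁻¹ : Aˣ) : A) * (u₀ : A) = 1 := by
      rw [← Units.val_mul, inv_mul_cancel, Units.val_one]
    have : ((u₀ : A))^n * (((u₀⁻¹ : Aˣ) : A))^n = 1 := by
      rw [← mul_pow, ← Units.val_mul, mul_inv_cancel, Units.val_one, one_pow]
    calc (1 + z + a * w ^ 2) * (1 + -↑u₀⁻¹ ^ n * (a * w ^ 2))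
        = (1 + z + a * w^2) - ((1+z+a*w^2) * (↑u₀⁻¹:A)^n) * (a * w^2) := by ring
      _ = (1 + z + a * w^2) - (↑u₀^n * (↑u₀⁻¹:A)^n) * (a * w^2) := by rw [hu0n]
      _ = 1 + z := by rw [this]; ring

theorem rootReduced {A : Type*} [CommRing A] [Algebra ℂ A] [FiniteDimensional ℂ A]
    [IsReduced A] {n : ℕ} (hn : n ≠ 0) (x : A) : ∃ y : A, y ^ n = x := by
  have : IsArtinianRing A := isArtinian_of_tower ℂ inferInstance
  let e := IsArtinianRing.equivPi A
  have hcomp : ∀ I : MaximalSpectrum A, ∃ y : A ⧸ I.1, y ^ n = e x I := by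
    intro I
    have : I.1.IsMaximal := I.2
    have hfin : FiniteDimensional ℂ (A ⧸ I.1) := Module.Finite.of_surjective
      (Ideal.Quotient.mkₐ ℂ I.1).toLinearMap (Ideal.Quotient.mkₐ_surjective ℂ _)
    have : Algebra.IsIntegral ℂ (A ⧸ I.1) := Algebra.IsIntegral.of_finite ℂ _
    obtain ⟨c, hc⟩ := (IsAlgClosed.algebraMap_bijective_of_isIntegral (k := ℂ) (K := A ⧸ I.1)).2 (e x I)
    obtain ⟨μ, hμ⟩ := IsAlgClosed.exists_pow_nat_eq c (Nat.pos_of_ne_zero hn)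
    exact ⟨algebraMap ℂ _ μ, by rw [← map_pow, hμ, hc]⟩
  choose y hy using hcomp
  refine ⟨e.symm y, ?_⟩
  have : e (e.symm y ^ n) = e x := by
    rw [map_pow, AlgEquiv.apply_symm_apply]
    funext I
    exact hy I
  exact e.injective this

theorem rootUnit {A : Type*} [CommRing A] [Algebra ℂ A] [FiniteDimensional ℂ A]
    {n : ℕ} (hn : n ≠ 0) (x : A) (hx : IsUnit x) : ∃ y : A, y ^ n = x := by
  let N := nilradical A
  let π : A →+* A ⧸ N := Ideal.Quotient.mk N
  have hred : IsReduced (A ⧸ N) :=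
    (Ideal.isRadical_iff_quotient_reduced N).mp (Ideal.radical_isRadical (⊥ : Ideal A))
  have hfin : FiniteDimensional ℂ (A ⧸ N) := Module.Finite.of_surjective
    (Ideal.Quotient.mkₐ ℂ N).toLinearMap (Ideal.Quotient.mkₐ_surjective ℂ _)
  obtain ⟨ybar, hybar⟩ := rootReduced (A := A ⧸ N) hn (π x)
  obtain ⟨y, rfl⟩ := Ideal.Quotient.mk_surjective ybar
  -- y is a unit: y^n - x ∈ N, x unit, so y^n = x + nilpotent is unit, so y unit
  have hmem : y ^ n - x ∈ N := by
    have : π (y ^ n - x) = 0 := by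
      rw [map_sub, map_pow]
      rw [hybar, sub_self]
    exact (Ideal.Quotient.eq_zero_iff_mem).mp this
  have hnil : IsNilpotent (y ^ n - x) := hmem
  have hyn : IsUnit (y ^ n) := by
    have : y ^ n = x + (y ^ n - x) := by ring
    rw [this]
    exact hnil.isUnit_add_left_of_commute hx (Commute.all _ _)
  have hy : IsUnit y := (isUnit_pow_iff hn).mp hyn
  -- z := x * (y⁻¹)^n - 1 is nilpotent
  obtain ⟨u, hu⟩ := hy
  set z : A := x * ((u⁻¹ : Aˣ) : A) ^ n - 1 with hz
  have hznil : IsNilpotent z := by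
    have : z = -(((u⁻¹ : Aˣ) : A) ^ n) * (y ^ n - x) := by
      have h1 : ((u⁻¹ : Aˣ) : A) ^ n * y ^ n = 1 := by
        rw [← hu, ← mul_pow, ← Units.val_mul, inv_mul_cancel, Units.val_one, one_pow]
      rw [hz]
      calc x * ((u⁻¹ : Aˣ) : A) ^ n - 1 = -(((u⁻¹ : Aˣ) : A) ^ n) * (y^n - x)
            + (((u⁻¹ : Aˣ) : A) ^ n * y ^ n - 1) := by ring
        _ = -(((u⁻¹ : Aˣ) : A) ^ n) * (y ^ n - x) := by rw [h1]; ring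
    rw [this]
    exact (Commute.all _ _).isNilpotent_mul_left hnil
  obtain ⟨k, hk⟩ := hznil
  have hk2 : z ^ (2 ^ k) = 0 := pow_eq_zero_of_le (Nat.le_of_lt ((Nat.lt_two_pow_self (n := k)))) hk
  obtain ⟨v, hv, hvn⟩ := rootOneAdd hn k z hk2
  refine ⟨y * v, ?_⟩
  rw [mul_pow, hvn, hz]
  rw [← hu]
  calc (u : A) ^ n * (1 + (x * ((u⁻¹ : Aˣ) : A) ^ n - 1))
      = ((u : A) * ((u⁻¹ : Aˣ) : A)) ^ n * x := by ring
    _ = x := by rw [← Units.val_mul, mul_inv_cancel, Units.val_one, one_pow, one_mul]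

theorem rootEnd {V : Type*} [AddCommGroup V] [Module ℂ V] [FiniteDimensional ℂ V]
    {n : ℕ} (hn : n ≠ 0) (f : (V →ₗ[ℂ] V)ˣ) :
    ∃ c : (V →ₗ[ℂ] V)ˣ, c ^ n = f ∧
      ∀ b : V →ₗ[ℂ] V, Commute b (f : V →ₗ[ℂ] V) → Commute b (c : V →ₗ[ℂ] V) := by
  set s : Set (V →ₗ[ℂ] V) := {(f : V →ₗ[ℂ] V), ((f⁻¹ : (V →ₗ[ℂ] V)ˣ) : V →ₗ[ℂ] V)} with hs
  have hcomm : ∀ a ∈ s, ∀ b ∈ s, a * b = b * a := by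
    have h1 : (f : V →ₗ[ℂ] V) * (f⁻¹ : (V →ₗ[ℂ] V)ˣ) = (f⁻¹ : (V →ₗ[ℂ] V)ˣ) * (f : V →ₗ[ℂ] V) := by
      rw [← Units.val_mul, ← Units.val_mul, mul_inv_cancel, inv_mul_cancel]
    rintro a (rfl | rfl) b (rfl | rfl) <;> simp_all
  let A := Algebra.adjoin ℂ s
  letI : CommRing A := Algebra.adjoinCommRingOfComm ℂ hcomm
  haveI : FiniteDimensional ℂ A := FiniteDimensional.finiteDimensional_submodule
    (Subalgebra.toSubmodule A)
  set x : A := ⟨(f : V →ₗ[ℂ] V), Algebra.subset_adjoin (by simp [hs])⟩ with hx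
  set xinv : A := ⟨((f⁻¹ : (V →ₗ[ℂ] V)ˣ) : V →ₗ[ℂ] V), Algebra.subset_adjoin (by simp [hs])⟩
  have hxu : IsUnit x := by
    refine IsUnit.of_mul_eq_one (a := x) xinv ?_
    ext1
    simp [x, xinv, ← Units.val_mul]
  obtain ⟨y, hy⟩ := rootUnit hn x hxu
  have hyn : (y : V →ₗ[ℂ] V) ^ n = (f : V →ₗ[ℂ] V) := by
    have := congrArg (Subtype.val) hy
    simpa using this
  have hyu : IsUnit (y : V →ₗ[ℂ] V) := by
    rw [← isUnit_pow_iff hn, hyn]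
    exact f.isUnit
  obtain ⟨c, hc⟩ := hyu
  refine ⟨c, ?_, ?_⟩
  · ext1
    rw [Units.val_pow_eq_pow_val, hc, hyn]
  · intro b hb
    rw [hc]
    have hb' : ∀ a ∈ s, Commute b a := by
      have h2 : Commute b ((f⁻¹ : (V →ₗ[ℂ] V)ˣ) : V →ₗ[ℂ] V) := hb.units_inv_right
      rintro a (rfl | rfl)
      exacts [hb, h2]
    exact Algebra.commute_of_mem_adjoin_of_forall_mem_commute y.2 hb'

theorem part1 {G : Type*} [Group G] (K : Subgroup G) [K.Normal]
    [Finite (G ⧸ K)] [IsCyclic (G ⧸ K)]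
    {V : Type*} [AddCommGroup V] [Module ℂ V] [FiniteDimensional ℂ V]
    (ρ : ↥K →* (V →ₗ[ℂ] V)ˣ)
    (hconj : ∀ g : G, RepEquiv ρ (ρ.comp (intK K g))) :
    ∃ ρt : G →* (V →ₗ[ℂ] V)ˣ, (∀ k : ↥K, ρt (k : G) = ρ k) := by
  classical
  set n := Nat.card (G ⧸ K) with hn_def
  have hn : n ≠ 0 := Nat.card_pos.ne'
  obtain ⟨q, hq⟩ := IsCyclic.exists_generator (α := G ⧸ K)
  have horder : orderOf q = n := orderOf_eq_card_of_forall_mem_zpowers hq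
  set g₀ : G := q.out with hg₀def
  have hg₀ : ((g₀ : G) : G ⧸ K) = q := QuotientGroup.out_eq' q
  have hgn : g₀ ^ n ∈ K := by
    rw [← QuotientGroup.eq_one_iff, QuotientGroup.mk_pow, hg₀, ← horder]
    exact pow_orderOf_eq_one q
  set k₀ : K := ⟨g₀ ^ n, hgn⟩ with hk₀
  obtain ⟨T₀, hT₀⟩ := hconj g₀
  have hstep₀ : ∀ k : K, ρ (MulAut.conjNormal g₀ k) = T₀ * ρ k * T₀⁻¹ := fun k => hT₀ k
  have hTn₀ : ∀ m : ℕ, ∀ k : K,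
      ρ (MulAut.conjNormal (g₀ ^ m) k) = T₀ ^ m * ρ k * (T₀ ^ m)⁻¹ := by
    intro m
    induction m with
    | zero => intro k; simp
    | succ m ih =>
      intro k
      have h : MulAut.conjNormal (g₀ ^ (m + 1)) k
          = MulAut.conjNormal g₀ (MulAut.conjNormal (g₀ ^ m) k) := by
        rw [pow_succ', map_mul]
        rfl
      rw [h, hstep₀, ih]
      group
  have hk₀conj : ∀ k : K, MulAut.conjNormal ((g₀ ^ n : G)) k = k₀ * k * k₀⁻¹ := by
    intro k
    ext
    simp only [MulAut.conjNormal_apply, Subgroup.coe_mul, InvMemClass.coe_inv, hk₀]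
  set S : (V →ₗ[ℂ] V)ˣ := (ρ k₀)⁻¹ * T₀ ^ n with hS
  have hScomm : ∀ k : K, S * ρ k = ρ k * S := by
    intro k
    have h1 : T₀ ^ n * ρ k * (T₀ ^ n)⁻¹ = ρ k₀ * ρ k * (ρ k₀)⁻¹ := by
      rw [← hTn₀ n k, hk₀conj k, map_mul, map_mul, map_inv]
    have h2 : T₀ ^ n * ρ k = ρ k₀ * ρ k * (ρ k₀)⁻¹ * T₀ ^ n := by
      have := congrArg (· * T₀ ^ n) h1
      simpa [mul_assoc] using this
    calc S * ρ k = (ρ k₀)⁻¹ * (T₀ ^ n * ρ k) := by rw [hS]; group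
      _ = (ρ k₀)⁻¹ * (ρ k₀ * ρ k * (ρ k₀)⁻¹ * T₀ ^ n) := by rw [h2]
      _ = ρ k * S := by rw [hS]; group
  have hg₀k₀ : MulAut.conjNormal g₀ k₀ = k₀ := by
    ext
    simp only [MulAut.conjNormal_apply, Subgroup.coe_mul, InvMemClass.coe_inv, hk₀]
    group
  have hcT₀S : Commute T₀ S := by
    have h5 : Commute T₀ (ρ k₀) := by
      have h3 : ρ k₀ = T₀ * ρ k₀ * T₀⁻¹ := by rw [← hstep₀ k₀, hg₀k₀]
      show T₀ * ρ k₀ = ρ k₀ * T₀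
      conv_rhs => rw [h3]
      group
    exact (h5.inv_right).mul_right ((Commute.refl T₀).pow_right n)
  obtain ⟨c, hcn, hcc⟩ := rootEnd hn S⁻¹
  have hcomm_unit : ∀ b : (V →ₗ[ℂ] V)ˣ, Commute b S → Commute b c := by
    intro b hb
    have h1 : Commute (b : V →ₗ[ℂ] V) ((S : (V →ₗ[ℂ] V)ˣ) : V →ₗ[ℂ] V) := by
      show (b : V →ₗ[ℂ] V) * S = (S : V →ₗ[ℂ] V) * b
      rw [← Units.val_mul, ← Units.val_mul]
      exact congrArg Units.val hb.eq
    have h2 := hcc b h1.units_inv_right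
    refine Units.ext ?_
    rw [Units.val_mul, Units.val_mul]
    exact h2.eq
  have hcρ : ∀ k : K, Commute (ρ k) c :=
    fun k => hcomm_unit (ρ k) (hScomm k).symm
  have hcT₀ : Commute T₀ c := hcomm_unit T₀ hcT₀S
  set T : (V →ₗ[ℂ] V)ˣ := T₀ * c with hT
  have hρk₀T : T ^ n = ρ k₀ := by
    rw [hT, hcT₀.mul_pow, hcn, hS]
    group
  have hcρ' : ∀ k : K, c * ρ k * c⁻¹ = ρ k := by
    intro k
    rw [← (hcρ k).eq]
    group
  have hstep : ∀ k : K, ρ (MulAut.conjNormal g₀ k) = T * ρ k * T⁻¹ := by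
    intro k
    calc ρ (MulAut.conjNormal g₀ k) = T₀ * ρ k * T₀⁻¹ := hstep₀ k
      _ = T₀ * (c * ρ k * c⁻¹) * T₀⁻¹ := by rw [hcρ' k]
      _ = T * ρ k * T⁻¹ := by rw [hT]; group
  have hTn : ∀ m : ℕ, ∀ k : K,
      ρ (MulAut.conjNormal (g₀ ^ m) k) = T ^ m * ρ k * (T ^ m)⁻¹ := by
    intro m
    induction m with
    | zero => intro k; simp
    | succ m ih =>
      intro k
      have h : MulAut.conjNormal (g₀ ^ (m + 1)) k
          = MulAut.conjNormal g₀ (MulAut.conjNormal (g₀ ^ m) k) := by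
        rw [pow_succ', map_mul]
        rfl
      rw [h, hstep, ih]
      group
  have hconjZ : ∀ m : ℤ, ∀ k : K,
      ρ (MulAut.conjNormal (g₀ ^ m) k) = T ^ m * ρ k * (T ^ m)⁻¹ := by
    intro m k
    cases m with
    | ofNat m => simpa [zpow_natCast] using hTn m k
    | negSucc m =>
      set m' : ℕ := m + 1 with hm'
      have hm : (Int.negSucc m) = -(m' : ℤ) := by simp [hm', Int.negSucc_eq]
      rw [hm]
      have hinv : MulAut.conjNormal (g₀ ^ (m' : ℕ))
          (MulAut.conjNormal (g₀ ^ (-(m' : ℤ))) k) = k := by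
        ext
        simp only [MulAut.conjNormal_apply]
        rw [← zpow_natCast g₀ m']
        group
      have h1 := hTn m' (MulAut.conjNormal (g₀ ^ (-(m' : ℤ))) k)
      rw [hinv] at h1
      have h3 : ρ (MulAut.conjNormal (g₀ ^ (-(m' : ℤ))) k) = (T ^ m')⁻¹ * ρ k * T ^ m' := by
        rw [h1]; group
      rw [h3, zpow_neg, zpow_natCast]
      group
  choose M hM using fun g : G => Subgroup.mem_zpowers_iff.mp (hq ((g : G ⧸ K)))
  have memK : ∀ (g : G) (m : ℤ), q ^ m = (g : G ⧸ K) → g * g₀ ^ (-m) ∈ K := by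
    intro g m hm
    rw [← QuotientGroup.eq_one_iff]
    have h1 : ((g * g₀ ^ (-m) : G) : G ⧸ K) = (g : G ⧸ K) * q ^ (-m) := by
      rw [QuotientGroup.mk_mul, QuotientGroup.mk_zpow, hg₀]
    rw [h1, ← hm, ← zpow_add]
    simp
  set e : G → (V →ₗ[ℂ] V)ˣ :=
    fun g => ρ ⟨g * g₀ ^ (-(M g)), memK g (M g) (hM g)⟩ * T ^ (M g) with he
  have hL : ∀ (g : G) (m : ℤ) (h : q ^ m = (g : G ⧸ K)),
      e g = ρ ⟨g * g₀ ^ (-m), memK g m h⟩ * T ^ m := by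
    intro g m h
    obtain ⟨j, hj⟩ : ((n : ℤ)) ∣ (m - M g) := by
      rw [← horder]
      apply orderOf_dvd_iff_zpow_eq_one.mpr
      rw [zpow_sub, h, hM g]
      simp
    have hmeq : m = M g + n * j := by linarith [hj]
    have hcoe : (⟨g * g₀ ^ (-m), memK g m h⟩ : K)
        = ⟨g * g₀ ^ (-(M g)), memK g (M g) (hM g)⟩ * k₀ ^ (-j) := by
      ext
      push_cast [hk₀]
      rw [← zpow_natCast g₀ n, ← zpow_mul, mul_assoc, ← zpow_add]
      congr 1
      rw [hmeq]; ring
    rw [hcoe, map_mul, map_zpow]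
    have hk' : ρ k₀ = T ^ n := hρk₀T.symm
    rw [hk', mul_assoc]
    congr 1
    rw [← zpow_natCast T n, ← zpow_mul, ← zpow_add]
    congr 1
    rw [hmeq]; ring
    rfl
  have hmul : ∀ g h : G, e (g * h) = e g * e h := by
    intro g h
    have hgh : q ^ (M g + M h) = ((g * h : G) : G ⧸ K) := by
      rw [zpow_add, hM g, hM h, QuotientGroup.mk_mul]
    rw [hL (g * h) (M g + M h) hgh]
    have hsplit : (⟨g * h * g₀ ^ (-(M g + M h)), memK _ _ hgh⟩ : K)
        = ⟨g * g₀ ^ (-(M g)), memK g _ (hM g)⟩ *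
          MulAut.conjNormal (g₀ ^ (M g)) ⟨h * g₀ ^ (-(M h)), memK h _ (hM h)⟩ := by
      ext
      push_cast [MulAut.conjNormal_apply]
      group
    rw [hsplit, map_mul, hconjZ (M g)]
    rw [he]
    show _ = (ρ ⟨g * g₀ ^ (-(M g)), memK g (M g) (hM g)⟩ * T ^ (M g)) *
      (ρ ⟨h * g₀ ^ (-(M h)), memK h (M h) (hM h)⟩ * T ^ (M h))
    rw [zpow_add]
    group
  refine ⟨MonoidHom.mk' e hmul, ?_⟩
  intro k
  have h0 : q ^ (0 : ℤ) = ((k : G) : G ⧸ K) := by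
    rw [zpow_zero]
    exact ((QuotientGroup.eq_one_iff _).mpr k.2).symm
  show e (k : G) = ρ k
  rw [hL (k : G) 0 h0]
  have hkk : (⟨(k : G) * g₀ ^ (-(0 : ℤ)), memK _ 0 h0⟩ : K) = k := by
    ext; simp
  rw [hkk]
  simp

theorem part2 {G : Type*} [Group G] (K : Subgroup G) [K.Normal] [Finite (G ⧸ K)]
    {V : Type*} [AddCommGroup V] [Module ℂ V]
    (ρ : ↥K →* (V →ₗ[ℂ] V)ˣ) (hss : IsSemisimpleRep ρ)
    (ρt : G →* (V →ₗ[ℂ] V)ˣ) (hrest : ∀ k : ↥K, ρt (k : G) = ρ k) :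
    IsSemisimpleRep ρt := by
  classical
  haveI := Fintype.ofFinite (G ⧸ K)
  set n := Nat.card (G ⧸ K) with hn_def
  have hn : n ≠ 0 := Nat.card_pos.ne'
  have hnℂ : (n : ℂ) ≠ 0 := Nat.cast_ne_zero.mpr hn
  intro W hW
  have hWK : ∀ k : K, ∀ v ∈ W, ((ρ k : (V →ₗ[ℂ] V)ˣ) : V →ₗ[ℂ] V) v ∈ W := by
    intro k v hv
    have h := hW (k : G) v hv
    rwa [hrest k] at h
  obtain ⟨W', hW'K, hcompl⟩ := hss W hWK
  set π : V →ₗ[ℂ] V := W.subtype ∘ₗ W.projectionOnto W' hcompl with hπ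
  have hπ_left : ∀ v ∈ W, π v = v := by
    intro v hv
    show (W.subtype) (W.projectionOnto W' hcompl v) = v
    have := Submodule.projectionOnto_apply_left hcompl ⟨v, hv⟩
    rw [this]
    rfl
  have hπ_right : ∀ v ∈ W', π v = 0 := by
    intro v hv
    show (W.subtype) (W.projectionOnto W' hcompl v) = 0
    rw [Submodule.projectionOnto_apply_of_mem_right hcompl hv]
    rfl
  have hπ_mem : ∀ v, π v ∈ W := fun v => (W.projectionOnto W' hcompl v).2
  have hπcomm : ∀ k : K, ∀ v, ((ρ k : (V →ₗ[ℂ] V)ˣ) : V →ₗ[ℂ] V) (π v)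
      = π (((ρ k : (V →ₗ[ℂ] V)ˣ) : V →ₗ[ℂ] V) v) := by
    intro k v
    obtain ⟨a, b, ha, hb, rfl⟩ := Submodule.codisjoint_iff_exists_add_eq.mp hcompl.codisjoint v
    have l1 : π (a + b) = a := by rw [map_add, hπ_left a ha, hπ_right b hb, add_zero]
    have l2 : ((ρ k : (V →ₗ[ℂ] V)ˣ) : V →ₗ[ℂ] V) (a + b)
        = ((ρ k : (V →ₗ[ℂ] V)ˣ) : V →ₗ[ℂ] V) a + ((ρ k : (V →ₗ[ℂ] V)ˣ) : V →ₗ[ℂ] V) b :=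
      map_add _ a b
    rw [l1, l2, map_add π, hπ_left _ (hWK k a ha), hπ_right _ (hW'K k b hb), add_zero]
  set cp : G → (V →ₗ[ℂ] V) := fun g => ((ρt g : (V →ₗ[ℂ] V)ˣ) : V →ₗ[ℂ] V) * π *
    (((ρt g)⁻¹ : (V →ₗ[ℂ] V)ˣ) : V →ₗ[ℂ] V) with hcp
  have hcp_apply : ∀ g v, cp g v = ((ρt g : (V →ₗ[ℂ] V)ˣ) : V →ₗ[ℂ] V)
      (π ((((ρt g)⁻¹ : (V →ₗ[ℂ] V)ˣ) : V →ₗ[ℂ] V) v)) := fun g v => rfl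
  have hval_inv : ∀ (u : (V →ₗ[ℂ] V)ˣ) (v : V),
      (u : V →ₗ[ℂ] V) (((u⁻¹ : (V →ₗ[ℂ] V)ˣ) : V →ₗ[ℂ] V) v) = v := by
    intro u v
    rw [← Module.End.mul_apply, ← Units.val_mul, mul_inv_cancel, Units.val_one,
      Module.End.one_apply]
  have hcp_mem : ∀ g v, cp g v ∈ W := by
    intro g v
    rw [hcp_apply]
    exact hW g _ (hπ_mem _)
  have hcp_id : ∀ g, ∀ v ∈ W, cp g v = v := by
    intro g v hv
    rw [hcp_apply]
    have h1 : (((ρt g)⁻¹ : (V →ₗ[ℂ] V)ˣ) : V →ₗ[ℂ] V) v ∈ W := by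
      rw [← map_inv]
      exact hW g⁻¹ v hv
    rw [hπ_left _ h1, hval_inv]
  have hcp_coset : ∀ (g : G) (k : K), cp (g * (k : G)) = cp g := by
    intro g k
    have hmid : ((ρ k : (V →ₗ[ℂ] V)ˣ) : V →ₗ[ℂ] V) * π *
        (((ρ k)⁻¹ : (V →ₗ[ℂ] V)ˣ) : V →ₗ[ℂ] V) = π := by
      ext v
      simp only [Module.End.mul_apply]
      rw [hπcomm k]
      congr 1
      exact hval_inv (ρ k) v
    have : cp (g * (k : G)) = ((ρt g : (V →ₗ[ℂ] V)ˣ) : V →ₗ[ℂ] V) *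
        (((ρ k : (V →ₗ[ℂ] V)ˣ) : V →ₗ[ℂ] V) * π * (((ρ k)⁻¹ : (V →ₗ[ℂ] V)ˣ) : V →ₗ[ℂ] V)) *
        (((ρt g)⁻¹ : (V →ₗ[ℂ] V)ˣ) : V →ₗ[ℂ] V) := by
      rw [hcp]
      simp only [map_mul, hrest k, mul_inv_rev, Units.val_mul]
      noncomm_ring
    rw [this, hmid]
  have hcp_conj : ∀ (g g' : G), ((ρt g : (V →ₗ[ℂ] V)ˣ) : V →ₗ[ℂ] V) * cp g' *
      (((ρt g)⁻¹ : (V →ₗ[ℂ] V)ˣ) : V →ₗ[ℂ] V) = cp (g * g') := by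
    intro g g'
    rw [hcp]
    simp only [map_mul, mul_inv_rev, Units.val_mul]
    noncomm_ring
  set p : V →ₗ[ℂ] V := (n : ℂ)⁻¹ • ∑ x : G ⧸ K, cp (Quotient.out x) with hp
  have hp_apply : ∀ v, p v = (n : ℂ)⁻¹ • ∑ x : G ⧸ K, cp (Quotient.out x) v := by
    intro v
    rw [hp]
    simp [LinearMap.sum_apply]
  have hp_mem : ∀ v, p v ∈ W := by
    intro v
    rw [hp_apply]
    exact W.smul_mem _ (Submodule.sum_mem _ fun x _ => hcp_mem _ v)
  have hp_id : ∀ v ∈ W, p v = v := by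
    intro v hv
    have hsc : ∑ x : G ⧸ K, cp (Quotient.out x) v = ∑ _x : G ⧸ K, v :=
      Finset.sum_congr rfl fun x _ => hcp_id (Quotient.out x) v hv
    rw [hp_apply, hsc, Finset.sum_const, Finset.card_univ, ← Nat.card_eq_fintype_card, ← hn_def]
    rw [← Nat.cast_smul_eq_nsmul ℂ, smul_smul, inv_mul_cancel₀ hnℂ, one_smul]
  have hSum : ∀ g : G, ((ρt g : (V →ₗ[ℂ] V)ˣ) : V →ₗ[ℂ] V) * (∑ x : G ⧸ K, cp (Quotient.out x))
      = (∑ x : G ⧸ K, cp (Quotient.out x)) * ((ρt g : (V →ₗ[ℂ] V)ˣ) : V →ₗ[ℂ] V) := by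
    intro g
    have key : ∀ x : G ⧸ K, ((ρt g : (V →ₗ[ℂ] V)ˣ) : V →ₗ[ℂ] V) * cp (Quotient.out x) *
        (((ρt g)⁻¹ : (V →ₗ[ℂ] V)ˣ) : V →ₗ[ℂ] V) = cp (Quotient.out ((g : G ⧸ K) * x)) := by
      intro x
      rw [hcp_conj]
      have h2 : ∃ k : K, Quotient.out ((g : G ⧸ K) * x) = g * Quotient.out x * (k : G) := by
        refine ⟨⟨(g * Quotient.out x)⁻¹ * Quotient.out ((g : G ⧸ K) * x), ?_⟩, by group⟩
        have hmk : ((g * Quotient.out x : G) : G ⧸ K)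
            = ((Quotient.out ((g : G ⧸ K) * x) : G) : G ⧸ K) := by
          rw [QuotientGroup.mk_mul, QuotientGroup.out_eq', QuotientGroup.out_eq']
        rw [← QuotientGroup.eq_one_iff, QuotientGroup.mk_mul, QuotientGroup.mk_inv, hmk]
        group
      obtain ⟨k, hk⟩ := h2
      rw [hk, hcp_coset]
    have hre : ∑ x : G ⧸ K, cp (Quotient.out ((g : G ⧸ K) * x)) = ∑ x : G ⧸ K, cp (Quotient.out x) := by
      exact Fintype.sum_bijective (fun x => (g : G ⧸ K) * x)
        (Group.mulLeft_bijective _) _ _ (fun x => rfl)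
    have h3 : ((ρt g : (V →ₗ[ℂ] V)ˣ) : V →ₗ[ℂ] V) * (∑ x : G ⧸ K, cp (Quotient.out x)) *
        (((ρt g)⁻¹ : (V →ₗ[ℂ] V)ˣ) : V →ₗ[ℂ] V) = ∑ x : G ⧸ K, cp (Quotient.out x) := by
      rw [Finset.mul_sum, Finset.sum_mul]
      have hsc2 : ∑ x : G ⧸ K, ((ρt g : (V →ₗ[ℂ] V)ˣ) : V →ₗ[ℂ] V) * cp (Quotient.out x) *
          (((ρt g)⁻¹ : (V →ₗ[ℂ] V)ˣ) : V →ₗ[ℂ] V)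
          = ∑ x : G ⧸ K, cp (Quotient.out ((g : G ⧸ K) * x)) :=
        Finset.sum_congr rfl fun x _ => key x
      rw [hsc2]
      exact hre
    have hBA : (((ρt g)⁻¹ : (V →ₗ[ℂ] V)ˣ) : V →ₗ[ℂ] V) * ((ρt g : (V →ₗ[ℂ] V)ˣ) : V →ₗ[ℂ] V)
        = 1 := by
      rw [← Units.val_mul, inv_mul_cancel, Units.val_one]
    have h5 : (((ρt g : (V →ₗ[ℂ] V)ˣ) : V →ₗ[ℂ] V) * (∑ x : G ⧸ K, cp (Quotient.out x)) *
        (((ρt g)⁻¹ : (V →ₗ[ℂ] V)ˣ) : V →ₗ[ℂ] V)) * ((ρt g : (V →ₗ[ℂ] V)ˣ) : V →ₗ[ℂ] V)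
        = ((ρt g : (V →ₗ[ℂ] V)ˣ) : V →ₗ[ℂ] V) * (∑ x : G ⧸ K, cp (Quotient.out x)) := by
      rw [mul_assoc, hBA, mul_one]
    rw [← h5, h3]
  have hp_equiv : ∀ (g : G) (v : V), p (((ρt g : (V →ₗ[ℂ] V)ˣ) : V →ₗ[ℂ] V) v)
      = ((ρt g : (V →ₗ[ℂ] V)ˣ) : V →ₗ[ℂ] V) (p v) := by
    intro g v
    have h := congrArg (fun f : V →ₗ[ℂ] V => f v) (hSum g)
    simp only [Module.End.mul_apply] at h
    rw [hp, LinearMap.smul_apply, LinearMap.smul_apply, ← h, map_smul]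
  refine ⟨LinearMap.ker p, ?_, ?_⟩
  · intro g v hv
    rw [LinearMap.mem_ker] at hv ⊢
    rw [hp_equiv g v, hv, map_zero]
  · constructor
    · rw [disjoint_iff]
      ext v
      simp only [Submodule.mem_inf, LinearMap.mem_ker, Submodule.mem_bot]
      constructor
      · rintro ⟨hvW, hvk⟩
        rw [← hp_id v hvW, hvk]
      · rintro rfl
        exact ⟨W.zero_mem, map_zero p⟩
    · rw [codisjoint_iff, eq_top_iff]
      intro v _
      refine Submodule.mem_sup.mpr ⟨p v, hp_mem v, v - p v, ?_, by abel⟩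
      rw [LinearMap.mem_ker, map_sub, hp_id (p v) (hp_mem v), sub_self]

/-- If `G/K` is finite cyclic and `ρ : K → GL(V)` is a semisimple representation on a
finite-dimensional complex vector space such that `ρ ∘ Int_g|_K` is equivalent to `ρ`
for every `g ∈ G`, then `ρ` extends to a semisimple representation of `G`. -/
theorem statement11 {G : Type*} [Group G] (K : Subgroup G) [K.Normal]
    [Finite (G ⧸ K)] [IsCyclic (G ⧸ K)]
    {V : Type*} [AddCommGroup V] [Module ℂ V] [FiniteDimensional ℂ V]
    (ρ : ↥K →* (V →ₗ[ℂ] V)ˣ) (hss : IsSemisimpleRep ρ)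
    (hconj : ∀ g : G, RepEquiv ρ (ρ.comp (intK K g))) :
    ∃ ρt : G →* (V →ₗ[ℂ] V)ˣ, (∀ k : ↥K, ρt (k : G) = ρ k) ∧ IsSemisimpleRep ρt := by
  obtain ⟨ρt, hrest⟩ := part1 K ρ hconj
  exact ⟨ρt, hrest, part2 K ρ hss ρt hrest⟩
end
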